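/- Let s ≥ 3 be an odd integer. For every complex number t with Re t > 1, ∑ (−1)^(∑_p ⌊v_p(n)/s⌋) · 2^(ω(n)) · n^(−t) = ζ(t)²·ζ(2st) / (ζ(2t)·ζ(st)²), where the sum runs over all positive integers n such that no exponent in the prime factorization of n is divisible by s (i.e., s ∤ v_p(n) for every prime p dividing n; n = 1 is included with summand 1), ω(n) is the number of distinct prime factors of n, and ζ denotes the Riemann zeta function. -/

import Mathlib

/-!
The coefficient of `n ^ (-t)` is multiplicative (the sign and the factor `2 ^ ω(n)` split over the
primes, and so does the condition on the exponents), with value `c(e)` at `p ^ e`, where `c(0) = 1`,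
`c(e) = 0` if `s ∣ e` and `c(e) = 2 (-1) ^ ⌊e / s⌋` otherwise. Grouping the exponents
`e = q s + r` with `0 ≤ r < s`, the Euler factor `∑ c(e) x ^ e` at `x = p ^ (-t)` is
`1 + 2 (x + ⋯ + x ^ (s - 1)) / (1 + x ^ s) = (1 + x) (1 - x ^ s) / ((1 - x) (1 + x ^ s))`, which is
`(1 - x ^ 2) (1 - x ^ s) ^ 2 / ((1 - x) ^ 2 (1 - x ^ (2 s)))`, the Euler factor of
`ζ(t)² ζ(2st) / (ζ(2t) ζ(st)²)`. Absolute convergence follows from `|c| ≤ 2 ^ ω(n) ≤ d(n)`.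
-/

open ArithmeticFunction LSeries
open scoped LSeries.notation ArithmeticFunction.sigma ArithmeticFunction.zeta

theorem HasSum.sum_range_mul_add {α : Type*} [AddCommMonoid α] [TopologicalSpace α]
    [ContinuousAdd α] [RegularSpace α] {f : ℕ → α} {a : α} (hf : HasSum f a) {s : ℕ}
    (hs : 0 < s) : HasSum (fun q ↦ ∑ r ∈ Finset.range s, f (q * s + r)) a := by
  have : NeZero s := ⟨hs.ne'⟩
  refine ((Nat.divModEquiv s).symm.hasSum_iff.mpr hf).prod_fiberwise fun q ↦ ?_
  simpa [Finset.sum_range] using hasSum_fintype _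

section NormedRing

variable {R : Type*} [NormedRing R] [NormOneClass R] {x : R}

theorem one_sub_ne_zero_of_norm_lt_one (hx : ‖x‖ < 1) : 1 - x ≠ 0 := by
  rw [sub_ne_zero]; rintro rfl; simp at hx

theorem one_add_ne_zero_of_norm_lt_one (hx : ‖x‖ < 1) : 1 + x ≠ 0 := by
  simpa using one_sub_ne_zero_of_norm_lt_one (x := -x) (by simpa using hx)

end NormedRing

theorem LSeries.term_mul_of_coprime {f : ArithmeticFunction ℂ} (hf : f.IsMultiplicative) (t : ℂ)
    {m n : ℕ} (hmn : m.Coprime n) :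
    term (f ·) t (m * n) = term (f ·) t m * term (f ·) t n := by
  rcases eq_or_ne m 0 with rfl | hm
  · simp
  rcases eq_or_ne n 0 with rfl | hn
  · simp
  simp only [term_of_ne_zero (mul_ne_zero hm hn), term_of_ne_zero hm, term_of_ne_zero hn,
    hf.map_mul_of_coprime hmn, Nat.cast_mul, Complex.natCast_mul_natCast_cpow, mul_div_mul_comm]

theorem ArithmeticFunction.IsMultiplicative.LSeries_eulerProduct_hasProd
    {f : ArithmeticFunction ℂ} (hf : f.IsMultiplicative) {t : ℂ}
    (hsum : LSeriesSummable (f ·) t) :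
    HasProd (fun p : Nat.Primes ↦ ∑' e, f (p ^ e) * ((p : ℂ) ^ (-t)) ^ e) (L (f ·) t) := by
  have hterm (p : Nat.Primes) (e : ℕ) :
      term (f ·) t (p ^ e) = f (p ^ e) * ((p : ℂ) ^ (-t)) ^ e := by
    rw [term_of_ne_zero (pow_ne_zero e p.prop.ne_zero), div_eq_mul_inv, ← Complex.cpow_neg,
      Nat.cast_pow, ← Complex.natCast_cpow_natCast_mul, Complex.cpow_nat_mul]
  have := EulerProduct.eulerProduct_hasProd (by simp [hf.map_one]) (term_mul_of_coprime hf t)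
    hsum.norm (term_zero _ _)
  simp only [hterm] at this
  exact this

theorem ArithmeticFunction.LSeriesSummable_sigma_zero {t : ℂ} (ht : 1 < t.re) :
    LSeriesSummable ↗(σ 0) t := by
  have hζ : LSeriesSummable ↗ζ t := LSeriesSummable_zeta_iff.mpr ht
  have hσ : ↗(σ 0) = ↗ζ ⍟ ↗ζ := by
    rw [← zeta_mul_pow_eq_sigma, pow_zero_eq_zeta]
    ext n
    rw [← natCoe_apply (R := ℂ), natCoe_mul, ← coe_mul]
    rfl
  exact hσ ▸ hζ.convolution hζ

theorem Complex.one_lt_re_natCast_mul {k : ℕ} (hk : k ≠ 0) {t : ℂ} (ht : 1 < t.re) :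
    1 < ((k : ℂ) * t).re := by
  have : (1 : ℝ) ≤ k := by exact_mod_cast Nat.one_le_iff_ne_zero.mpr hk
  simp only [Complex.mul_re, Complex.natCast_re, Complex.natCast_im, zero_mul, sub_zero]
  nlinarith

theorem Complex.norm_natCast_cpow_neg_lt_one {n : ℕ} (hn : 1 < n) {t : ℂ} (ht : 0 < t.re) :
    ‖(n : ℂ) ^ (-t)‖ < 1 := by
  rw [Complex.norm_natCast_cpow_of_pos (by omega), Complex.neg_re]
  exact Real.rpow_lt_one_of_one_lt_of_neg (by exact_mod_cast hn) (by linarith)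

theorem riemannZeta_natCast_mul_eulerProduct_hasProd {k : ℕ} (hk : k ≠ 0) {t : ℂ}
    (ht : 1 < t.re) :
    HasProd (fun p : Nat.Primes ↦ (1 - ((p : ℂ) ^ (-t)) ^ k)⁻¹) (riemannZeta (k * t)) := by
  simpa only [neg_mul_eq_mul_neg, Complex.cpow_nat_mul] using
    riemannZeta_eulerProduct_hasProd (Complex.one_lt_re_natCast_mul hk ht)

namespace NonDivisibleExponents

noncomputable def localCoeff (s e : ℕ) : ℂ :=
  if e = 0 then 1 else if s ∣ e then 0 else 2 * (-1) ^ (e / s)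

variable {s : ℕ}

theorem norm_localCoeff_le (e : ℕ) : ‖localCoeff s e‖ ≤ 2 := by
  unfold localCoeff; split_ifs <;> norm_num

theorem localCoeff_mul (hs : 0 < s) (q : ℕ) : localCoeff s (q * s) = if q = 0 then 1 else 0 := by
  rcases eq_or_ne q 0 with rfl | hq
  · simp [localCoeff]
  · simp [localCoeff, hq, hs.ne']

theorem localCoeff_mul_add {r : ℕ} (hr : 0 < r) (hrs : r < s) (q : ℕ) :
    localCoeff s (q * s + r) = 2 * (-1) ^ q := by
  have hs : 0 < s := hr.trans hrs
  have hndvd : ¬ s ∣ q * s + r := by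
    rw [Nat.dvd_add_right (dvd_mul_left s q)]; exact Nat.not_dvd_of_pos_of_lt hr hrs
  rw [localCoeff, if_neg (by omega), if_neg hndvd, Nat.mul_comm, Nat.mul_add_div hs,
    Nat.div_eq_of_lt hrs, add_zero]

theorem hasSum_localCoeff_mul_pow (hs : 0 < s) {x : ℂ} (hx : ‖x‖ < 1) :
    HasSum (fun e ↦ localCoeff s e * x ^ e)
      ((1 + x) * (1 - x ^ s) / ((1 - x) * (1 + x ^ s))) := by
  set X := ∑ r ∈ Finset.Ico 1 s, x ^ r
  have hxs : ‖-x ^ s‖ < 1 := by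
    rw [norm_neg, norm_pow]; exact pow_lt_one₀ (norm_nonneg x) hx hs.ne'
  have hsummable : Summable fun e ↦ localCoeff s e * x ^ e :=
    .of_norm_bounded ((summable_geometric_of_lt_one (norm_nonneg x) hx).mul_left 2) fun e ↦ by
      rw [norm_mul, norm_pow]; gcongr; exact norm_localCoeff_le e
  have hblock (q : ℕ) : ∑ r ∈ Finset.range s, localCoeff s (q * s + r) * x ^ (q * s + r) =
      (if q = 0 then 1 else 0) + 2 * X * (-x ^ s) ^ q := by
    rw [Finset.range_eq_Ico, Finset.sum_eq_sum_Ico_succ_bot hs, add_zero, localCoeff_mul hs,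
      zero_add, Finset.mul_sum, Finset.sum_mul]
    congr 1
    · split_ifs with hq <;> simp [hq]
    · refine Finset.sum_congr rfl fun r hr ↦ ?_
      obtain ⟨hr1, hrs⟩ := Finset.mem_Ico.mp hr
      rw [localCoeff_mul_add hr1 hrs, pow_add, pow_mul', neg_pow (x ^ s)]
      ring
  have hblocks : HasSum (fun q ↦ (if q = 0 then 1 else 0) + 2 * X * (-x ^ s) ^ q)
      (1 + 2 * X * (1 - -x ^ s)⁻¹) :=
    (hasSum_ite_eq 0 1).add ((hasSum_geometric_of_norm_lt_one hxs).mul_left _)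
  have hvalue :
      (1 + x) * (1 - x ^ s) / ((1 - x) * (1 + x ^ s)) = 1 + 2 * X * (1 - -x ^ s)⁻¹ := by
    have hX : X * (x - 1) = x ^ s - x := by
      simpa using geom_sum_Ico_mul x (Nat.one_le_iff_ne_zero.mpr hs.ne')
    have := one_sub_ne_zero_of_norm_lt_one hx
    have := one_add_ne_zero_of_norm_lt_one (x := x ^ s) (by simpa using hxs)
    rw [sub_neg_eq_add]
    field_simp
    linear_combination 2 * hX
  have htsum : ∑' e, localCoeff s e * x ^ e = 1 + 2 * X * (1 - -x ^ s)⁻¹ :=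
    (hsummable.hasSum.sum_range_mul_add hs).unique (by simpa only [hblock] using hblocks)
  rw [hvalue, ← htsum]
  exact hsummable.hasSum

def noExponentDvd (s : ℕ) : Set ℕ :=
  {n | 0 < n ∧ ∀ p : ℕ, p.Prime → p ∣ n → ¬ s ∣ n.factorization p}

noncomputable def seriesCoeff (s : ℕ) : ArithmeticFunction ℂ where
  toFun n := if n = 0 then 0 else n.factorization.prod fun _ e ↦ localCoeff s e
  map_zero' := if_pos rfl

theorem seriesCoeff_apply {n : ℕ} (hn : n ≠ 0) :
    seriesCoeff s n = ∏ p ∈ n.primeFactors, localCoeff s (n.factorization p) := by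
  simp [seriesCoeff, hn, Finsupp.prod]

theorem seriesCoeff_apply_prime_pow {p : ℕ} (hp : p.Prime) (e : ℕ) :
    seriesCoeff s (p ^ e) = localCoeff s e := by
  simp [seriesCoeff, hp.ne_zero, hp.factorization_pow, Finsupp.prod_single_index, localCoeff]

theorem isMultiplicative_seriesCoeff : (seriesCoeff s).IsMultiplicative := by
  refine IsMultiplicative.iff_ne_zero.mpr ⟨by simp [seriesCoeff], fun {m n} hm hn hmn ↦ ?_⟩
  simp only [seriesCoeff, ArithmeticFunction.coe_mk, mul_eq_zero, hm, hn, or_self, if_false,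
    Nat.factorization_mul_of_coprime hmn]
  refine Finsupp.prod_add_index_of_disjoint ?_ _
  simpa only [Nat.support_factorization] using hmn.disjoint_primeFactors

theorem norm_seriesCoeff_le (n : ℕ) : ‖seriesCoeff s n‖ ≤ σ 0 n := by
  rcases eq_or_ne n 0 with rfl | hn
  · simp
  rw [seriesCoeff_apply hn, norm_prod, sigma_zero_apply, Nat.card_divisors hn]
  push_cast
  refine Finset.prod_le_prod (fun _ _ ↦ norm_nonneg _) fun p hp ↦ ?_
  have : 0 < n.factorization p :=
    (Nat.prime_of_mem_primeFactors hp).factorization_pos_of_dvd hn (Nat.dvd_of_mem_primeFactors hp)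
  calc ‖localCoeff s (n.factorization p)‖ ≤ 2 := norm_localCoeff_le _
    _ ≤ _ := by exact_mod_cast Nat.succ_le_succ this

theorem seriesCoeff_eq_indicator (n : ℕ) :
    seriesCoeff s n = (noExponentDvd s).indicator (fun n ↦
      (-1 : ℂ) ^ (∑ p ∈ n.primeFactors, n.factorization p / s) *
        2 ^ n.primeFactors.card) n := by
  rcases eq_or_ne n 0 with rfl | hn
  · simp [noExponentDvd]
  rw [seriesCoeff_apply hn]
  by_cases h : ∀ p : ℕ, p.Prime → p ∣ n → ¬ s ∣ n.factorization p
  · rw [Set.indicator_of_mem (show n ∈ noExponentDvd s from ⟨Nat.pos_of_ne_zero hn, h⟩)]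
    calc ∏ p ∈ n.primeFactors, localCoeff s (n.factorization p)
        = ∏ p ∈ n.primeFactors, (-1 : ℂ) ^ (n.factorization p / s) * 2 := by
          refine Finset.prod_congr rfl fun p hp ↦ ?_
          have hp' := Nat.prime_of_mem_primeFactors hp
          rw [localCoeff, if_neg, if_neg (h p hp' (Nat.dvd_of_mem_primeFactors hp)), mul_comm]
          exact (hp'.factorization_pos_of_dvd hn (Nat.dvd_of_mem_primeFactors hp)).ne'
      _ = _ := by rw [Finset.prod_mul_distrib, Finset.prod_pow_eq_pow_sum, Finset.prod_const]
  · rw [Set.indicator_of_notMem fun hmem ↦ h hmem.2]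
    push Not at h
    obtain ⟨p, hp, hpn, hdvd⟩ := h
    refine Finset.prod_eq_zero (Nat.mem_primeFactors.mpr ⟨hp, hpn, hn⟩) ?_
    rw [localCoeff, if_neg, if_pos hdvd]
    exact (hp.factorization_pos_of_dvd hn hpn).ne'

theorem LSeriesSummable_seriesCoeff {t : ℂ} (ht : 1 < t.re) :
    LSeriesSummable (seriesCoeff s ·) t := by
  exact (LSeriesSummable_sigma_zero ht).norm.of_norm_bounded fun n ↦
    norm_term_le t (by simpa using norm_seriesCoeff_le n)

theorem tsum_noExponentDvd_eq_LSeries (t : ℂ) :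
    ∑' n : noExponentDvd s,
      (-1 : ℂ) ^ (∑ p ∈ (n : ℕ).primeFactors, (n : ℕ).factorization p / s) *
        2 ^ (n : ℕ).primeFactors.card * ((n : ℕ) : ℂ) ^ (-t) = L (seriesCoeff s ·) t := by
  refine (tsum_subtype (noExponentDvd s) fun n : ℕ ↦
    (-1 : ℂ) ^ (∑ p ∈ n.primeFactors, n.factorization p / s) * 2 ^ n.primeFactors.card *
      (n : ℂ) ^ (-t)).trans (tsum_congr fun n ↦ ?_)
  rcases eq_or_ne n 0 with rfl | hn
  · simp [noExponentDvd]
  rw [Set.indicator_mul_left, ← seriesCoeff_eq_indicator, term_of_ne_zero hn, Complex.cpow_neg,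
    div_eq_mul_inv]

theorem tsum_seriesCoeff_prime_pow_mul (hs : 0 < s) {p : ℕ} (hp : p.Prime) {x : ℂ}
    (hx : ‖x‖ < 1) :
    ∑' e, seriesCoeff s (p ^ e) * x ^ e = (1 + x) * (1 - x ^ s) / ((1 - x) * (1 + x ^ s)) := by
  simp_rw [seriesCoeff_apply_prime_pow hp]
  exact (hasSum_localCoeff_mul_pow hs hx).tsum_eq

theorem eulerFactor_identity (hs : 0 < s) {x : ℂ} (hx : ‖x‖ < 1) :
    (1 + x) * (1 - x ^ s) / ((1 - x) * (1 + x ^ s)) *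
        ((1 - x ^ 2)⁻¹ * ((1 - x ^ s)⁻¹ * (1 - x ^ s)⁻¹)) =
      (1 - x ^ 1)⁻¹ * (1 - x ^ 1)⁻¹ * (1 - x ^ (2 * s))⁻¹ := by
  have hxs : ‖x ^ s‖ < 1 := by rw [norm_pow]; exact pow_lt_one₀ (norm_nonneg x) hx hs.ne'
  have := one_sub_ne_zero_of_norm_lt_one hx
  have := one_add_ne_zero_of_norm_lt_one hx
  have := one_sub_ne_zero_of_norm_lt_one hxs
  have := one_add_ne_zero_of_norm_lt_one hxs
  rw [show 1 - x ^ 2 = (1 - x) * (1 + x) by ring, pow_mul',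
    show 1 - (x ^ s) ^ 2 = (1 - x ^ s) * (1 + x ^ s) by ring]
  field_simp

theorem LSeries_seriesCoeff_mul_riemannZeta (hs : 0 < s) {t : ℂ} (ht : 1 < t.re) :
    L (seriesCoeff s ·) t * (riemannZeta (2 * t) * riemannZeta (s * t) ^ 2) =
      riemannZeta t ^ 2 * riemannZeta ((2 * s : ℕ) * t) := by
  have hζ {k : ℕ} (hk : k ≠ 0) := riemannZeta_natCast_mul_eulerProduct_hasProd hk ht
  have hL := isMultiplicative_seriesCoeff.LSeries_eulerProduct_hasProd
    (LSeriesSummable_seriesCoeff (s := s) ht)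
  have hlhs := hL.mul ((hζ two_ne_zero).mul ((hζ hs.ne').mul (hζ hs.ne')))
  have hrhs := ((hζ one_ne_zero).mul (hζ one_ne_zero)).mul (hζ (k := 2 * s) (by omega))
  have key := hlhs.unique (hrhs.congr_fun fun p ↦ ?_)
  · rw [Nat.cast_ofNat, Nat.cast_one, one_mul] at key
    linear_combination key
  · have hx := Complex.norm_natCast_cpow_neg_lt_one p.prop.one_lt (by linarith)
    rw [tsum_seriesCoeff_prime_pow_mul hs p.prop hx]
    exact eulerFactor_identity hs hx

end NonDivisibleExponents

theorem stmt_18_general (s : ℕ) (hs : 3 ≤ s) (t : ℂ) (ht : 1 < t.re) :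
    (∑' n : {n : ℕ // 0 < n ∧ ∀ p : ℕ, p.Prime → p ∣ n → ¬ s ∣ n.factorization p},
      (-1 : ℂ) ^ (∑ p ∈ (n : ℕ).primeFactors, (n : ℕ).factorization p / s) *
        (2 : ℂ) ^ (n : ℕ).primeFactors.card * ((n : ℕ) : ℂ) ^ (-t)) =
      riemannZeta t ^ 2 * riemannZeta ((2 * s : ℕ) * t) /
        (riemannZeta (2 * t) * riemannZeta (s * t) ^ 2) := by
  have hζ2 : riemannZeta (2 * t) ≠ 0 := riemannZeta_ne_zero_of_one_lt_re
    (by exact_mod_cast Complex.one_lt_re_natCast_mul two_ne_zero ht)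
  have hζs : riemannZeta (s * t) ≠ 0 :=
    riemannZeta_ne_zero_of_one_lt_re (Complex.one_lt_re_natCast_mul (by omega) ht)
  refine (NonDivisibleExponents.tsum_noExponentDvd_eq_LSeries t).trans ?_
  rw [eq_div_iff (mul_ne_zero hζ2 (pow_ne_zero 2 hζs))]
  exact NonDivisibleExponents.LSeries_seriesCoeff_mul_riemannZeta (by omega) ht

/-- For odd `s ≥ 3` and `Re t > 1`, the Dirichlet series over positive integers `n` such that
`s` divides none of the prime-factorization exponents of `n`, with coefficient
`(-1)^(∑_p ⌊v_p(n)/s⌋) · 2^(ω(n))`, equals `ζ(t)² ζ(2st) / (ζ(2t) ζ(st)²)`. -/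
theorem stmt_18 (s : ℕ) (hs : 3 ≤ s) (hodd : Odd s) (t : ℂ) (ht : 1 < t.re) :
    (∑' n : {n : ℕ // 0 < n ∧ ∀ p : ℕ, p.Prime → p ∣ n → ¬ s ∣ n.factorization p},
      (-1 : ℂ) ^ (∑ p ∈ (n : ℕ).primeFactors, (n : ℕ).factorization p / s) *
        (2 : ℂ) ^ (n : ℕ).primeFactors.card * ((n : ℕ) : ℂ) ^ (-t)) =
      riemannZeta t ^ 2 * riemannZeta ((2 * s : ℕ) * t) /
        (riemannZeta (2 * t) * riemannZeta (s * t) ^ 2) :=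
  stmt_18_general s hs t ht
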